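/- For t > 0, the larger root s1(t) = (t e^t + 1 - e^t + sqrt(1 - 2e^t + e^{2t} - t^2 e^t)) / (t(e^t - 1)) of the quadratic M(t,·) satisfies s1(t) < 1. -/

import Mathlib

noncomputable def s1 (t : ℝ) : ℝ :=
  (t * Real.exp t + 1 - Real.exp t +
      Real.sqrt (1 - 2 * Real.exp t + Real.exp (2 * t) - t ^ 2 * Real.exp t)) /
    (t * (Real.exp t - 1))

lemma lemA (x : ℝ) (hx : 0 < x) : 0 < (x - 1) * Real.exp x + 1 := by
  rcases le_or_gt 1 x with h | h
  · nlinarith [Real.exp_pos x]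
  · have h1 : 1 - x < Real.exp (-x) := by
      have := Real.add_one_lt_exp (show (-x) ≠ 0 by linarith)
      linarith
    have h2 : (1 - x) * Real.exp x < Real.exp (-x) * Real.exp x :=
      mul_lt_mul_of_pos_right h1 (Real.exp_pos x)
    have h3 : Real.exp (-x) * Real.exp x = 1 := by
      rw [← Real.exp_add]; simp
    nlinarith

lemma lemB (t : ℝ) (ht : 0 < t) : 0 < (t - 2) * Real.exp t + t + 2 := by
  have key : StrictMonoOn (fun x : ℝ => (x - 2) * Real.exp x + x + 2) (Set.Ici 0) := by
    apply strictMonoOn_of_deriv_pos (convex_Ici 0)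
    · fun_prop
    · intro x hx
      rw [interior_Ici] at hx
      have hd : HasDerivAt (fun x : ℝ => (x - 2) * Real.exp x + x + 2)
          ((x - 1) * Real.exp x + 1) x := by
        have h1 : HasDerivAt (fun x : ℝ => (x - 2) * Real.exp x)
            (1 * Real.exp x + (x - 2) * Real.exp x) x :=
          ((hasDerivAt_id x).sub_const 2).mul (Real.hasDerivAt_exp x)
        have := (h1.add_const 2).comp x (hasDerivAt_id x)
        have h2 := (h1.add (hasDerivAt_id x)).add_const 2
        refine h2.congr_deriv ?_
        ring
      rw [hd.deriv]
      exact lemA x hx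
  have := key (Set.self_mem_Ici) (Set.mem_Ici.mpr ht.le) ht
  simpa using this

theorem s1_lt_one (t : ℝ) (ht : 0 < t) : s1 t < 1 := by
  have hE := Real.exp_pos t
  have hgt : t + 1 < Real.exp t := Real.add_one_lt_exp (ne_of_gt ht)
  have hden : 0 < t * (Real.exp t - 1) := mul_pos ht (by linarith)
  have hy : 0 < Real.exp t - 1 - t := by linarith
  have hsq : Real.sqrt (1 - 2 * Real.exp t + Real.exp (2 * t) - t ^ 2 * Real.exp t) <
      Real.exp t - 1 - t := by
    rw [Real.sqrt_lt' hy]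
    have h2t : Real.exp (2 * t) = Real.exp t * Real.exp t := by
      rw [two_mul, Real.exp_add]
    have hB := lemB t ht
    nlinarith [mul_pos ht hB]
  rw [s1, div_lt_one hden]
  nlinarith
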